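/- arXiv:1008.3075 — 2 statements merged into one kernel-verified Lean document; each statement's English description precedes it below -/
import Mathlib

section
/- There exists a constant C > 0, depending only on ξ and α, such that for every n ∈ ℕ with n ≥ 1 and every x ∈ [0,1], A_n(x) := w̄(x) · Σ_{k : 0 ≤ k ≤ n, |k − nξ| ≤ √n} p_{n,k}(x) ≤ C n^{−α/2}. -/
open Real Set MeasureTheory

/-- The weight `w̄(x) = |x - ξ|^α`. -/
noncomputable def wbar (ξ α : ℝ) (x : ℝ) : ℝ := |x - ξ| ^ α

/-- Sup of `|g|` over `[0,1]`. -/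
noncomputable def supIcc (g : ℝ → ℝ) : ℝ := ⨆ x : Set.Icc (0:ℝ) 1, |g x|

/-- The weighted sup norm `‖w̄ f‖ = sup_{0 ≤ x ≤ 1} |w̄(x) f(x)|`. -/
noncomputable def nrmCw (ξ α : ℝ) (f : ℝ → ℝ) : ℝ := supIcc fun x => wbar ξ α x * f x

/-- Membership in `C_{w̄}`: continuous on `[0,1] \ {ξ}` and `w̄ f → 0` at `ξ`. -/
def MemCw (ξ α : ℝ) (f : ℝ → ℝ) : Prop :=
  ContinuousOn f (Set.Icc (0:ℝ) 1 \ {ξ}) ∧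
  Filter.Tendsto (fun x => wbar ξ α x * f x)
    (nhdsWithin ξ (Set.Icc (0:ℝ) 1 \ {ξ})) (nhds 0)

/-- Bernstein basis polynomial `p_{n,k}(x) = C(n,k) x^k (1-x)^{n-k}`. -/
noncomputable def bern (n k : ℕ) (x : ℝ) : ℝ :=
  (n.choose k : ℝ) * x ^ k * (1 - x) ^ (n - k)

/-- Bernstein operator `B_n(f,x) = Σ_{k=0}^n f(k/n) p_{n,k}(x)`. -/
noncomputable def Bop (n : ℕ) (f : ℝ → ℝ) (x : ℝ) : ℝ :=
  ∑ k ∈ Finset.range (n + 1), f ((k : ℝ) / n) * bern n k x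

/-- The smooth cut-off function ψ. -/
noncomputable def psi (x : ℝ) : ℝ :=
  if x ≤ 0 then 0 else if 1 ≤ x then 1 else 10 * x ^ 3 - 15 * x ^ 4 + 6 * x ^ 5

noncomputable def X1 (ξ : ℝ) (n : ℕ) : ℝ := (⌊n * ξ - 2 * Real.sqrt n⌋ : ℝ) / n
noncomputable def X2 (ξ : ℝ) (n : ℕ) : ℝ := (⌊n * ξ - Real.sqrt n⌋ : ℝ) / n
noncomputable def X3 (ξ : ℝ) (n : ℕ) : ℝ := (⌊n * ξ + Real.sqrt n⌋ : ℝ) / n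
noncomputable def X4 (ξ : ℝ) (n : ℕ) : ℝ := (⌊n * ξ + 2 * Real.sqrt n⌋ : ℝ) / n

/-- `n` is large enough that `0 < x1 < x2 < x3 < x4 < 1`. -/
def GoodN (ξ : ℝ) (n : ℕ) : Prop :=
  0 < X1 ξ n ∧ X1 ξ n < X2 ξ n ∧ X2 ξ n < X3 ξ n ∧ X3 ξ n < X4 ξ n ∧ X4 ξ n < 1

noncomputable def psib1 (ξ : ℝ) (n : ℕ) (x : ℝ) : ℝ := psi ((x - X1 ξ n) / (X2 ξ n - X1 ξ n))
noncomputable def psib2 (ξ : ℝ) (n : ℕ) (x : ℝ) : ℝ := psi ((x - X3 ξ n) / (X4 ξ n - X3 ξ n))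

/-- The linear function `P(f,x)` through `(x1, f(x1))` and `(x4, f(x4))`. -/
noncomputable def Pl (ξ : ℝ) (n : ℕ) (f : ℝ → ℝ) (x : ℝ) : ℝ :=
  (x - X4 ξ n) / (X1 ξ n - X4 ξ n) * f (X1 ξ n) +
    (X1 ξ n - x) / (X1 ξ n - X4 ξ n) * f (X4 ξ n)

/-- `F̄_n(f,x) = f(x)(1 - ψ̄1(x) + ψ̄2(x)) + ψ̄1(x)(1 - ψ̄2(x)) P(f,x)`. -/
noncomputable def Fbar (ξ : ℝ) (n : ℕ) (f : ℝ → ℝ) (x : ℝ) : ℝ :=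
  f x * (1 - psib1 ξ n x + psib2 ξ n x) +
    psib1 ξ n x * (1 - psib2 ξ n x) * Pl ξ n f x

/-- The modified Bernstein operator `B̄_n(f,x) = B_n(F̄_n(f), x)`. -/
noncomputable def Bbar (ξ : ℝ) (n : ℕ) (f : ℝ → ℝ) (x : ℝ) : ℝ := Bop n (Fbar ξ n f) x

noncomputable def phi (x : ℝ) : ℝ := Real.sqrt (x * (1 - x))

noncomputable def deltaN (n : ℕ) (x : ℝ) : ℝ := phi x + 1 / Real.sqrt n

/-- `ρ` is an admissible step-weight with exponents `β0, β1` and comparison constant `C0`. -/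
def Admissible (ρ : ℝ → ℝ) (β0 β1 C0 : ℝ) : Prop :=
  1 ≤ C0 ∧ 0 ≤ β0 ∧ 0 ≤ β1 ∧
    ∀ x ∈ Set.Ioo (0:ℝ) 1,
      C0⁻¹ * (x ^ β0 * (1 - x) ^ β1) ≤ ρ x ∧ ρ x ≤ C0 * (x ^ β0 * (1 - x) ^ β1)

/-- The weighted sup norm `sup_{0<x<1} |w̄(x) w2(x) f''(x)|`, where `w2` is the
second-order weight (e.g. `ρ²` or `φ^{2λ}`). -/
noncomputable def nrm2 (ξ α : ℝ) (w2 f : ℝ → ℝ) : ℝ :=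
  ⨆ x : Set.Ioo (0:ℝ) 1, |wbar ξ α x * w2 x * deriv (deriv f) x|

/-- Membership in the weighted Sobolev-type class: `f ∈ C_{w̄}`, `f` differentiable on
`(0,1)` with `f'` locally absolutely continuous there (encoded by the fundamental
theorem of calculus for `f'`), and `‖w̄ · w2 · f''‖ < ∞`. -/
def MemW2 (ξ α : ℝ) (w2 : ℝ → ℝ) (f : ℝ → ℝ) : Prop :=
  MemCw ξ α f ∧
  (∀ x ∈ Set.Ioo (0:ℝ) 1, DifferentiableAt ℝ f x) ∧
  (∀ a ∈ Set.Ioo (0:ℝ) 1, ∀ b ∈ Set.Ioo (0:ℝ) 1,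
    deriv f b - deriv f a = ∫ t in a..b, deriv (deriv f) t) ∧
  BddAbove (Set.range fun x : Set.Ioo (0:ℝ) 1 =>
    |wbar ξ α x * w2 x * deriv (deriv f) x|)

/-- The weighted modulus of smoothness `ω²_ρ(f,t)_{w̄}`. -/
noncomputable def omega2 (ξ α : ℝ) (ρ f : ℝ → ℝ) (t : ℝ) : ℝ :=
  sSup {y : ℝ | ∃ h x : ℝ, 0 < h ∧ h ≤ t ∧ x ∈ Set.Icc (0:ℝ) 1 ∧
    x + h * ρ x ∈ Set.Icc (0:ℝ) 1 ∧ x - h * ρ x ∈ Set.Icc (0:ℝ) 1 ∧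
    y = |wbar ξ α x * (f (x + h * ρ x) - 2 * f x + f (x - h * ρ x))|}

lemma bern_nonneg (n k : ℕ) (x : ℝ) (hx0 : 0 ≤ x) (hx1 : x ≤ 1) : 0 ≤ bern n k x := by
  unfold bern
  exact mul_nonneg (mul_nonneg (Nat.cast_nonneg _) (pow_nonneg hx0 _))
    (pow_nonneg (by linarith) _)

lemma exp_le_quad (s : ℝ) (hs : |s| ≤ 1) : Real.exp s ≤ 1 + s + s ^ 2 := by
  rcases le_or_gt s 0 with h | h
  · have h1 := Real.add_one_le_exp (-s)
    have h2 : Real.exp s * Real.exp (-s) = 1 := by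
      rw [← Real.exp_add]; simp
    nlinarith [Real.exp_pos s, Real.exp_pos (-s), sq_nonneg s]
  · have hb := Real.exp_bound hs (n := 2) (by norm_num)
    rw [abs_le] at hb
    have h2 : ∑ m ∈ Finset.range 2, s ^ m / (m.factorial : ℝ) = 1 + s := by
      simp [Finset.sum_range_succ]
    rw [h2] at hb
    have hsq : |s| ^ 2 = s ^ 2 := sq_abs s
    norm_num [hsq] at hb
    nlinarith [hb.1, hb.2, sq_nonneg s]

lemma factor_le (s x : ℝ) (hs : |s| ≤ 1) (hx0 : 0 ≤ x) (hx1 : x ≤ 1) :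
    Real.exp (s * x) * (x * Real.exp (-s) + (1 - x)) ≤ Real.exp (s ^ 2) := by
  have hA : x * Real.exp (-s) + (1 - x) ≤ Real.exp (x * (Real.exp (-s) - 1)) := by
    have := Real.add_one_le_exp (x * (Real.exp (-s) - 1))
    linarith
  have h0 : 0 ≤ s + Real.exp (-s) - 1 := by
    have := Real.add_one_le_exp (-s); linarith
  have h1 : Real.exp (-s) ≤ 1 - s + s ^ 2 := by
    have := exp_le_quad (-s) (by rwa [abs_neg]); nlinarith
  have hexp : s * x + x * (Real.exp (-s) - 1) ≤ s ^ 2 := by nlinarith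
  calc Real.exp (s * x) * (x * Real.exp (-s) + (1 - x))
      ≤ Real.exp (s * x) * Real.exp (x * (Real.exp (-s) - 1)) :=
        mul_le_mul_of_nonneg_left hA (Real.exp_pos _).le
    _ = Real.exp (s * x + x * (Real.exp (-s) - 1)) := (Real.exp_add _ _).symm
    _ ≤ Real.exp (s ^ 2) := Real.exp_le_exp.2 hexp

lemma mgf_eq (n : ℕ) (s x : ℝ) :
    ∑ k ∈ Finset.range (n + 1), Real.exp (s * (n * x - k)) * bern n k x
      = (Real.exp (s * x) * (x * Real.exp (-s) + (1 - x))) ^ n := by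
  rw [mul_pow, add_pow, Finset.mul_sum]
  refine Finset.sum_congr rfl fun k hk => ?_
  have h1 : s * ((n : ℝ) * x - k) = (n : ℝ) * (s * x) + (k : ℝ) * (-s) := by ring
  rw [h1, Real.exp_add, Real.exp_nat_mul, Real.exp_nat_mul, bern, mul_pow]
  ring

lemma mgf_le (n : ℕ) (hn : 1 ≤ n) (s x : ℝ) (hs : |s| ≤ 1) (hs2 : s ^ 2 = 1 / n)
    (hx0 : 0 ≤ x) (hx1 : x ≤ 1) :
    ∑ k ∈ Finset.range (n + 1), Real.exp (s * (n * x - k)) * bern n k x ≤ Real.exp 1 := by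
  rw [mgf_eq]
  have hb0 : 0 ≤ Real.exp (s * x) * (x * Real.exp (-s) + (1 - x)) := by
    have : 0 ≤ x * Real.exp (-s) + (1 - x) :=
      add_nonneg (mul_nonneg hx0 (Real.exp_pos _).le) (by linarith)
    positivity
  have hpow := pow_le_pow_left₀ hb0 (factor_le s x hs hx0 hx1) n
  refine hpow.trans ?_
  rw [← Real.exp_nat_mul]
  apply Real.exp_le_exp.2
  rw [hs2]
  have hn0 : (n : ℝ) ≠ 0 := by positivity
  field_simp
  exact le_refl _

lemma poly_exp (α : ℝ) (hα : 0 < α) (u : ℝ) (hu : 0 ≤ u) :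
    u ^ α * Real.exp (-u) ≤ ((Nat.ceil α).factorial : ℝ) + 1 := by
  set m := Nat.ceil α with hm
  have hfac1 : (1 : ℝ) ≤ (m.factorial : ℝ) := Nat.one_le_cast.2 m.factorial_pos
  rcases le_or_gt u 1 with h | h
  · have h1 : u ^ α ≤ 1 := Real.rpow_le_one hu h hα.le
    have h2 : Real.exp (-u) ≤ 1 := Real.exp_le_one_iff.2 (by linarith)
    nlinarith [Real.rpow_nonneg hu α, Real.exp_pos (-u)]
  · have h1 : u ^ α ≤ u ^ m := by
      rw [← Real.rpow_natCast u m]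
      exact Real.rpow_le_rpow_of_exponent_le h.le (Nat.le_ceil α)
    have h2 : u ^ m / (m.factorial : ℝ) ≤ Real.exp u := by
      refine le_trans ?_ (Real.sum_le_exp_of_nonneg hu (m + 1))
      exact Finset.single_le_sum (f := fun i => u ^ i / (i.factorial : ℝ))
        (fun i _ => by positivity) (Finset.self_mem_range_succ m)
    have h3 : u ^ m ≤ (m.factorial : ℝ) * Real.exp u := by
      rw [div_le_iff₀ (by positivity)] at h2; linarith [h2]
    have h4 : Real.exp (-u) * Real.exp u = 1 := by rw [← Real.exp_add]; simp
    have h5 : u ^ α * Real.exp (-u) ≤ u ^ m * Real.exp (-u) :=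
      mul_le_mul_of_nonneg_right h1 (Real.exp_pos _).le
    nlinarith [Real.exp_pos (-u), Real.exp_pos u]

/-- `A_n(x) = w̄(x) Σ_{|k−nξ|≤√n} p_{n,k}(x) ≤ C n^{−α/2}`. -/
theorem stmt9 (ξ α : ℝ) (hξ : ξ ∈ Set.Ioo (0:ℝ) 1) (hα : 0 < α) :
    ∃ C > 0, ∀ n : ℕ, 1 ≤ n → ∀ x ∈ Set.Icc (0:ℝ) 1,
      wbar ξ α x * ∑ k ∈ Finset.range (n + 1),
          (if |(k : ℝ) - n * ξ| ≤ Real.sqrt n then bern n k x else 0) ≤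
        C * (n : ℝ) ^ (-(α/2)) := by
  set K : ℝ := ((Nat.ceil α).factorial : ℝ) + 1 with hK
  have hK0 : 0 < K := by positivity
  refine ⟨Real.exp 2 * K, by positivity, ?_⟩
  intro n hn x hx
  obtain ⟨hx0, hx1⟩ := hx
  have hn0 : (0:ℝ) < n := by exact_mod_cast hn
  have hsq : (0:ℝ) < Real.sqrt n := Real.sqrt_pos.2 hn0
  have hsq1 : (1:ℝ) ≤ Real.sqrt n := by
    rw [show (1:ℝ) = Real.sqrt 1 by simp]
    exact Real.sqrt_le_sqrt (by exact_mod_cast hn)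
  have hsqsq : Real.sqrt n * Real.sqrt n = n := Real.mul_self_sqrt hn0.le
  set d : ℝ := |x - ξ| with hd
  set u : ℝ := Real.sqrt n * d with hu
  have hd0 : 0 ≤ d := abs_nonneg _
  have hu0 : 0 ≤ u := mul_nonneg hsq.le hd0
  set s : ℝ := if ξ ≤ x then 1 / Real.sqrt n else -(1 / Real.sqrt n) with hs
  have hs_abs : |s| ≤ 1 := by
    have h1 : |(1:ℝ) / Real.sqrt n| ≤ 1 := by
      rw [abs_of_nonneg (by positivity)]
      rw [div_le_one hsq]; exact hsq1
    rw [hs]; split_ifs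
    · exact h1
    · rwa [abs_neg]
  have hs_sq : s ^ 2 = 1 / n := by
    have : (1 / Real.sqrt n) ^ 2 = 1 / n := by
      rw [div_pow, one_pow, sq, hsqsq]
    rw [hs]; split_ifs <;> simp [neg_pow, this]
  -- termwise bound
  have hterm : ∀ k ∈ Finset.range (n + 1),
      (if |(k : ℝ) - n * ξ| ≤ Real.sqrt n then bern n k x else 0) ≤
        Real.exp (1 - u) * (Real.exp (s * (n * x - k)) * bern n k x) := by
    intro k _
    have hb := bern_nonneg n k x hx0 hx1
    split_ifs with hcond
    · rw [abs_le] at hcond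
      have hkey : u - 1 ≤ s * (n * x - k) := by
        apply (mul_le_mul_iff_of_pos_left hsq).mp
        by_cases hxi : ξ ≤ x
        · have hdx : d = x - ξ := abs_of_nonneg (by linarith)
          have hssn : Real.sqrt n * s = 1 := by
            rw [hs, if_pos hxi]; field_simp
          have hrhs : Real.sqrt n * (s * ((n:ℝ) * x - k)) = (n:ℝ) * x - k := by
            rw [← mul_assoc, hssn, one_mul]
          have hnu : Real.sqrt n * u = (n:ℝ) * x - (n:ℝ) * ξ := by
            rw [hu, hdx, ← mul_assoc, hsqsq]; ring
          rw [hrhs]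
          linarith [hcond.2, hnu]
        · have hdx : d = ξ - x := by
            rw [hd, abs_of_nonpos (by linarith), neg_sub]
          have hssn : Real.sqrt n * s = -1 := by
            rw [hs, if_neg hxi]; field_simp
          have hrhs : Real.sqrt n * (s * ((n:ℝ) * x - k)) = (k:ℝ) - (n:ℝ) * x := by
            rw [← mul_assoc, hssn]; ring
          have hnu : Real.sqrt n * u = (n:ℝ) * ξ - (n:ℝ) * x := by
            rw [hu, hdx, ← mul_assoc, hsqsq]; ring
          rw [hrhs]
          linarith [hcond.1, hnu]
      have h1 : (1:ℝ) ≤ Real.exp (1 - u) * Real.exp (s * (n * x - k)) := by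
        rw [← Real.exp_add]
        linarith [Real.add_one_le_exp ((1 - u) + s * ((n:ℝ) * x - k))]
      calc bern n k x = 1 * bern n k x := by ring
        _ ≤ (Real.exp (1 - u) * Real.exp (s * (n * x - k))) * bern n k x :=
            mul_le_mul_of_nonneg_right h1 hb
        _ = Real.exp (1 - u) * (Real.exp (s * (n * x - k)) * bern n k x) := by ring
    · positivity
  have hsum : ∑ k ∈ Finset.range (n + 1),
      (if |(k : ℝ) - n * ξ| ≤ Real.sqrt n then bern n k x else 0) ≤
        Real.exp 2 * Real.exp (-u) := by
    calc ∑ k ∈ Finset.range (n + 1),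
        (if |(k : ℝ) - n * ξ| ≤ Real.sqrt n then bern n k x else 0)
        ≤ ∑ k ∈ Finset.range (n + 1),
            Real.exp (1 - u) * (Real.exp (s * (n * x - k)) * bern n k x) :=
          Finset.sum_le_sum hterm
      _ = Real.exp (1 - u) * ∑ k ∈ Finset.range (n + 1),
            Real.exp (s * (n * x - k)) * bern n k x := by rw [Finset.mul_sum]
      _ ≤ Real.exp (1 - u) * Real.exp 1 :=
          mul_le_mul_of_nonneg_left (mgf_le n hn s x hs_abs hs_sq hx0 hx1) (Real.exp_pos _).le
      _ = Real.exp 2 * Real.exp (-u) := by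
          rw [← Real.exp_add, ← Real.exp_add]; ring_nf
  -- combine
  have hw : wbar ξ α x = d ^ α := rfl
  have hw0 : 0 ≤ d ^ α := Real.rpow_nonneg hd0 _
  have hmain : d ^ α * Real.exp (-u) ≤ K * (n:ℝ) ^ (-(α/2)) := by
    have hP : (0:ℝ) < (n:ℝ) ^ (α/2) := Real.rpow_pos_of_pos hn0 _
    rw [Real.rpow_neg hn0.le, ← div_eq_mul_inv, le_div_iff₀ hP]
    have h2 : ((Real.sqrt n) : ℝ) ^ α = (n:ℝ) ^ (α/2) := by
      rw [Real.sqrt_eq_rpow, ← Real.rpow_mul hn0.le]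
      congr 1; ring
    have hdu : u ^ α = (n:ℝ) ^ (α/2) * d ^ α := by
      rw [hu, Real.mul_rpow hsq.le hd0, h2]
    calc d ^ α * Real.exp (-u) * (n:ℝ) ^ (α/2)
        = u ^ α * Real.exp (-u) := by rw [hdu]; ring
      _ ≤ K := poly_exp α hα u hu0
  calc wbar ξ α x * ∑ k ∈ Finset.range (n + 1),
        (if |(k : ℝ) - n * ξ| ≤ Real.sqrt n then bern n k x else 0)
      ≤ d ^ α * (Real.exp 2 * Real.exp (-u)) := by
        rw [hw]; exact mul_le_mul_of_nonneg_left hsum hw0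
    _ = Real.exp 2 * (d ^ α * Real.exp (-u)) := by ring
    _ ≤ Real.exp 2 * (K * (n:ℝ) ^ (-(α/2))) :=
        mul_le_mul_of_nonneg_left hmain (Real.exp_pos _).le
    _ = Real.exp 2 * K * (n:ℝ) ^ (-(α/2)) := by ring
end

section
/- Fix ξ ∈ (0,1). There exist constants C1, C2 > 0, depending only on ξ, such that for every sufficiently large n ∈ ℕ and every x with 0 ≤ x ≤ ξ − 3/√n, setting k_n = ⌊nξ − √n⌋, one has p_{n,k_n}(x) ≤ C1 · exp(−C2 · n (ξ − x)²). -/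
open Real Set MeasureTheory

/-- `p_{n,k_n}(x) ≤ C1 exp(−C2 n (ξ−x)²)` for `0 ≤ x ≤ ξ − 3/√n`,
with `k_n = ⌊nξ − √n⌋`. -/
theorem stmt17 (ξ : ℝ) (hξ : ξ ∈ Set.Ioo (0:ℝ) 1) :
    ∃ C1 > 0, ∃ C2 > 0, ∃ N : ℕ, ∀ n : ℕ, N ≤ n → ∀ x : ℝ,
      0 ≤ x → x ≤ ξ - 3 / Real.sqrt n →
        bern n (⌊n * ξ - Real.sqrt n⌋.toNat) x ≤ C1 * Real.exp (-C2 * n * (ξ - x) ^ 2) := by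
  refine ⟨1, one_pos, 1/36, by norm_num, 1, ?_⟩
  intro n hn x hx hxle
  set k : ℕ := (⌊(n:ℝ) * ξ - Real.sqrt n⌋).toNat with hk
  have hn1 : (1:ℝ) ≤ n := by exact_mod_cast hn
  have hn0 : (0:ℝ) < n := lt_of_lt_of_le one_pos hn1
  have hsn : (1:ℝ) ≤ Real.sqrt n := by
    rw [show (1:ℝ) = Real.sqrt 1 by simp]
    exact Real.sqrt_le_sqrt hn1
  have hsn0 : (0:ℝ) < Real.sqrt n := lt_of_lt_of_le one_pos hsn
  set d : ℝ := ξ - x with hd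
  have hd0 : 0 < d := by
    have : 0 < 3 / Real.sqrt n := by positivity
    have := hxle; simp only [hd]; linarith
  have hd1 : d < 1 := by
    have := hξ.2; simp only [hd]; linarith
  have hx1 : x < 1 := by
    have : 0 < 3 / Real.sqrt n := by positivity
    have := hξ.2; linarith
  -- key size inequality: n * d ≥ 3 * sqrt n
  have hnd : 3 * Real.sqrt n ≤ n * d := by
    have h1 : 3 / Real.sqrt n ≤ d := by simp only [hd]; linarith
    have h2 : 3 ≤ Real.sqrt n * d := by
      have := (div_le_iff₀ hsn0).1 h1
      linarith [mul_comm d (Real.sqrt n)]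
    have : Real.sqrt n * (Real.sqrt n * d) = n * d := by
      rw [← mul_assoc, Real.mul_self_sqrt (le_of_lt hn0)]
    nlinarith [Real.sqrt_nonneg (n:ℝ)]
  -- lower bound on k as a real number
  have hkge : (n:ℝ) * ξ - Real.sqrt n - 1 ≤ (k : ℝ) := by
    have h1 : ((⌊(n:ℝ) * ξ - Real.sqrt n⌋ : ℤ) : ℝ) ≤ ((⌊(n:ℝ) * ξ - Real.sqrt n⌋.toNat : ℤ) : ℝ) := by
      exact_mod_cast Int.self_le_toNat _
    have h2 : (n:ℝ) * ξ - Real.sqrt n - 1 ≤ ((⌊(n:ℝ) * ξ - Real.sqrt n⌋ : ℤ) : ℝ) :=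
      le_of_lt (Int.sub_one_lt_floor _)
    calc (n:ℝ) * ξ - Real.sqrt n - 1 ≤ _ := h2
      _ ≤ ((⌊(n:ℝ) * ξ - Real.sqrt n⌋.toNat : ℤ) : ℝ) := h1
      _ = (k : ℝ) := by push_cast [hk]; ring
  set L : ℝ := d / 6 with hL
  have hL0 : 0 < L := by positivity
  have hL1 : L ≤ 1 := by simp only [hL]; linarith
  have hexpL : Real.exp L - 1 ≤ L + L ^ 2 := by
    have h := Real.abs_exp_sub_one_sub_id_le (x := L) (by rw [abs_of_nonneg hL0.le]; exact hL1)
    have := (abs_le.1 h).2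
    linarith
  have hexpL1 : 1 ≤ Real.exp L := by
    rw [show (1:ℝ) = Real.exp 0 by simp]
    exact Real.exp_le_exp.2 hL0.le
  -- Step 1: bern * exp(L*k) ≤ (x * exp L + (1-x))^n
  have hx1' : 0 ≤ 1 - x := by linarith
  have step1 : bern n k x * Real.exp (L * k) ≤ (x * Real.exp L + (1 - x)) ^ n := by
    by_cases hkn : k ≤ n
    · have hmem : k ∈ Finset.range (n + 1) := Finset.mem_range.2 (Nat.lt_succ_of_le hkn)
      have hterm : bern n k x * Real.exp (L * k)
          = (x * Real.exp L) ^ k * (1 - x) ^ (n - k) * (n.choose k : ℝ) := by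
        rw [bern, mul_pow, show Real.exp L ^ k = Real.exp (L * k) by
          rw [← Real.exp_nat_mul]; ring_nf]
        ring
      rw [hterm, add_pow]
      refine Finset.single_le_sum (f := fun i => (x * Real.exp L) ^ i * (1 - x) ^ (n - i) * (n.choose i : ℝ)) ?_ hmem
      intro i _
      positivity
    · have : (n.choose k : ℝ) = 0 := by
        exact_mod_cast congrArg (Nat.cast (R := ℝ)) (Nat.choose_eq_zero_of_lt (Nat.lt_of_not_le hkn))
      rw [bern, this]
      simp only [zero_mul]
      positivity
  -- Step 2: (x * exp L + (1-x))^n ≤ exp (n * (x * (exp L - 1)))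
  have step2 : (x * Real.exp L + (1 - x)) ^ n ≤ Real.exp ((n:ℝ) * (x * (Real.exp L - 1))) := by
    have hbase : x * Real.exp L + (1 - x) ≤ Real.exp (x * (Real.exp L - 1)) := by
      have := Real.add_one_le_exp (x * (Real.exp L - 1))
      linarith
    have hbase0 : 0 ≤ x * Real.exp L + (1 - x) := by positivity
    calc (x * Real.exp L + (1 - x)) ^ n ≤ Real.exp (x * (Real.exp L - 1)) ^ n :=
          pow_le_pow_left₀ hbase0 hbase n
      _ = Real.exp ((n:ℝ) * (x * (Real.exp L - 1))) := by rw [← Real.exp_nat_mul]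
  -- combine
  have hcomb : bern n k x ≤ Real.exp ((n:ℝ) * (x * (Real.exp L - 1)) - L * k) := by
    have hek : 0 < Real.exp (L * k) := Real.exp_pos _
    rw [Real.exp_sub]
    rw [le_div_iff₀ hek]
    calc bern n k x * Real.exp (L * k) ≤ (x * Real.exp L + (1 - x)) ^ n := step1
      _ ≤ Real.exp ((n:ℝ) * (x * (Real.exp L - 1))) := step2
  -- Step 3: the exponent bound
  have step3 : (n:ℝ) * (x * (Real.exp L - 1)) - L * k ≤ -(1/36) * n * d ^ 2 := by
    have h1 : (n:ℝ) * (x * (Real.exp L - 1)) ≤ (n:ℝ) * (x * (L + L ^ 2)) := by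
      have : 0 ≤ (n:ℝ) * x := by positivity
      nlinarith
    have h2 : L * ((n:ℝ) * ξ - Real.sqrt n - 1) ≤ L * k := by
      exact mul_le_mul_of_nonneg_left hkge hL0.le
    have h3 : (n:ℝ) * (x * (L + L ^ 2)) ≤ (n:ℝ) * (L * x) + (n:ℝ) * L ^ 2 := by
      have hxle1 : x ≤ 1 := hx1.le
      nlinarith [mul_nonneg (mul_nonneg hn0.le hx1') (sq_nonneg L)]
    have hsn1 : Real.sqrt n + 1 ≤ 2 * Real.sqrt n := by linarith
    have h4 : Real.sqrt n + 1 ≤ (2/3) * (n * d) := by nlinarith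
    -- exponent ≤ L*(n*x - n*ξ + sqrt n + 1) + n * L^2
    have key : L * (-(n * d) + (Real.sqrt n + 1)) + (n:ℝ) * L ^ 2 ≤ -(1/36) * n * d ^ 2 := by
      have h5 : L * (-(n * d) + (Real.sqrt n + 1)) ≤ L * (-(1/3) * (n * d)) := by
        apply mul_le_mul_of_nonneg_left _ hL0.le
        linarith
      have h6 : L * (-(1/3) * (n * d)) = -(1/18) * n * d ^ 2 := by
        simp only [hL]; ring
      have h7 : (n:ℝ) * L ^ 2 = (1/36) * n * d ^ 2 := by simp only [hL]; ring
      linarith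
    have expand : (n:ℝ) * (L * x) + (n:ℝ) * L ^ 2 - L * ((n:ℝ) * ξ - Real.sqrt n - 1)
        = L * (-(n * d) + (Real.sqrt n + 1)) + (n:ℝ) * L ^ 2 := by
      simp only [hd]; ring
    linarith
  calc bern n k x ≤ Real.exp ((n:ℝ) * (x * (Real.exp L - 1)) - L * k) := hcomb
    _ ≤ Real.exp (-(1/36) * n * d ^ 2) := Real.exp_le_exp.2 step3
    _ = 1 * Real.exp (-(1/36) * n * (ξ - x) ^ 2) := by rw [one_mul, hd]
end
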